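/- arXiv:1512.03284 — 2 statements merged into one kernel-verified Lean document; each statement's English description precedes it below -/
import Mathlib

section
/- Let n,d ≥ 2 be integers, f ∈ H, ζ ∈ ℂⁿ with ‖ζ‖ = 1, and η ∈ ℂ with f(ζ) = η^{d−1}·ζ, and suppose the restriction of DF_f(ζ,η) to (ζ,η)^⊥ is invertible. Then 1 ≤ d·(‖f‖ + max{|η|^{d−1}, |η|^{d−2}})·‖(DF_f(ζ,η)|_{(ζ,η)^⊥})^{−1}‖. -/
/-!
Only the size of `DF_f(ζ,η)` matters: an invertible operator `A` on a nontrivial space has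
`1 ≤ ‖A‖ ‖A⁻¹‖`, and `DF_f(ζ,η)(u,μ) = Df(ζ)u - η^{d-1}u - (d-1)η^{d-2}μζ` has norm at most
`d (‖f‖ + max(|η|^{d-1}, |η|^{d-2})) ‖(u,μ)‖`. The bound `‖Df(ζ)‖ ≤ d‖f‖` is Cauchy–Schwarz
against the Bombieri–Weyl weights: `|p(ζ)|² ≤ ‖p‖²` for homogeneous `p` and unit `ζ`, because
the inverse weights are multinomial coefficients, so the dual sum is at most
`‖ζ‖^{2 deg p} = 1` by the multinomial theorem; and `Σⱼ ‖∂ⱼp‖² ≤ d² ‖p‖²` for `p` of degree `d`.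
-/

noncomputable section

open scoped BigOperators

/-- `ℂⁿ` with the hermitian (L2) norm. -/
abbrev Cn (n : ℕ) : Type := EuclideanSpace ℂ (Fin n)

/-- `ℂⁿ × ℂ` with the hermitian (L2) norm. -/
abbrev CnC (n : ℕ) : Type := WithLp 2 (EuclideanSpace ℂ (Fin n) × ℂ)

/-- The pair `(v, η) ∈ ℂⁿ × ℂ`. -/
def mkPair {n : ℕ} (v : Cn n) (η : ℂ) : CnC n := (WithLp.equiv 2 (Cn n × ℂ)).symm (v, η)

/-- Squared Bombieri-Weyl norm of a polynomial of degree `d` in `n` variables: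
for `p = ∑ a_α √(d choose α) X^α` it equals `∑ |a_α|²`, i.e.
`∑ |coeff α p|² * α! / d!`. -/
def bwNormSq (n d : ℕ) (p : MvPolynomial (Fin n) ℂ) : ℝ :=
  ∑ α ∈ p.support,
    (‖p.coeff α‖) ^ 2 * (∏ j, Nat.factorial (α j) : ℝ) / (Nat.factorial d : ℝ)

/-- Bombieri-Weyl norm of a system of `n` polynomials. -/
def bwNorm (n d : ℕ) (f : Fin n → MvPolynomial (Fin n) ℂ) : ℝ :=
  Real.sqrt (∑ i, bwNormSq n d (f i))

/-- Real part of the Bombieri-Weyl inner product of two systems. -/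
def bwInnerRe (n d : ℕ) (f g : Fin n → MvPolynomial (Fin n) ℂ) : ℝ :=
  ∑ i, ∑ α ∈ (f i).support ∪ (g i).support,
    ((f i).coeff α * (starRingEnd ℂ) ((g i).coeff α)).re
      * (∏ j, Nat.factorial (α j) : ℝ) / (Nat.factorial d : ℝ)

/-- Spherical (angular) distance of two systems w.r.t. the Bombieri-Weyl inner product. -/
def dSH (n d : ℕ) (f g : Fin n → MvPolynomial (Fin n) ℂ) : ℝ :=
  Real.arccos (bwInnerRe n d f g / (bwNorm n d f * bwNorm n d g))

/-- The map `F_f : ℂⁿ × ℂ → ℂⁿ`, `(X, Λ) ↦ f(X) - Λ^{d-1} X`. -/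
def FF (n d : ℕ) (f : Fin n → MvPolynomial (Fin n) ℂ) (w : CnC n) : Cn n :=
  (WithLp.equiv 2 (Fin n → ℂ)).symm fun i =>
    MvPolynomial.eval (fun j => ((WithLp.equiv 2 (Cn n × ℂ)) w).1 j) (f i)
      - ((WithLp.equiv 2 (Cn n × ℂ)) w).2 ^ (d - 1) * ((WithLp.equiv 2 (Cn n × ℂ)) w).1 i

/-- The hermitian orthogonal complement of `ℂ·w` in `ℂⁿ × ℂ`. -/
def perp {n : ℕ} (w : CnC n) : Submodule ℂ (CnC n) := (ℂ ∙ w)ᗮ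

/-- The derivative `DF_f(w)` restricted to the subspace `u^⊥`. -/
def DFr (n d : ℕ) (f : Fin n → MvPolynomial (Fin n) ℂ) (w u : CnC n) :
    perp u →L[ℂ] Cn n :=
  (fderiv ℂ (FF n d f) w).comp (perp u).subtypeL

/-- `DF_f(w)|_{u^⊥}` is invertible (as a map onto `ℂⁿ`). -/
def RestrInvertible (n d : ℕ) (f : Fin n → MvPolynomial (Fin n) ℂ) (w u : CnC n) : Prop :=
  (DFr n d f w u).IsInvertible

/-- The condition number `μ(f, v, λ) = ‖v‖^{d-1} ‖(DF_f(v,λ)|_{(v,λ)^⊥})⁻¹‖`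
(the value is meaningful whenever the restriction is invertible). -/
def mu (n d : ℕ) (f : Fin n → MvPolynomial (Fin n) ℂ) (w : CnC n) : ℝ :=
  ‖((WithLp.equiv 2 (Cn n × ℂ)) w).1‖ ^ (d - 1) * ‖(DFr n d f w w).inverse‖

/-- The block-diagonal map `diag(c·I_n, c')` on `ℂⁿ × ℂ`. -/
def diagMap (n : ℕ) (c c' : ℂ) : CnC n →L[ℂ] CnC n :=
  (((WithLp.prodContinuousLinearEquiv 2 ℂ (Cn n) ℂ).symm :
      (Cn n × ℂ) →L[ℂ] CnC n).comp
    (((c • ContinuousLinearMap.id ℂ (Cn n)).prodMap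
        (c' • ContinuousLinearMap.id ℂ ℂ)).comp
      ((WithLp.prodContinuousLinearEquiv 2 ℂ (Cn n) ℂ) : CnC n →L[ℂ] (Cn n × ℂ))))

/-- The condition number
`μ̂(f,v,λ) = ‖diag(‖f‖ I_n, ‖f‖^{(d-2)/(d-1)}) ∘ (DF_f(v,λ)|_{v^⊥×ℂ})⁻¹‖`
(the value is meaningful whenever the restriction is invertible);
here `v^⊥ × ℂ = (v,0)^⊥`. -/
def muHat (n d : ℕ) (f : Fin n → MvPolynomial (Fin n) ℂ) (v : Cn n) (lam : ℂ) : ℝ :=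
  ‖(diagMap n ((bwNorm n d f : ℝ) : ℂ)
      (((bwNorm n d f) ^ (((d : ℝ) - 2) / ((d : ℝ) - 1)) : ℝ) : ℂ)).comp
    (((perp (mkPair v 0)).subtypeL).comp
      (DFr n d f (mkPair v lam) (mkPair v 0)).inverse)‖

/-- Smale's `γ(f, ζ, η)`:
`‖(ζ,η)‖ · sup_{k ≥ 2} ‖(DF_f(ζ,η)|_{(ζ,η)^⊥})⁻¹ ∘ (1/k!) D^k F_f(ζ,η)‖^{1/(k-1)}`. -/
def gammaF (n d : ℕ) (f : Fin n → MvPolynomial (Fin n) ℂ) (w : CnC n) : ℝ :=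
  ‖w‖ * ⨆ k : ℕ, if 2 ≤ k then
      ‖((DFr n d f w w).inverse).compContinuousMultilinearMap
          (((Nat.factorial k : ℂ))⁻¹ • iteratedFDeriv ℂ k (FF n d f) w)‖
        ^ ((1 : ℝ) / ((k : ℝ) - 1))
    else 0

/-- Projective distance `d_P(x,y) = arccos(|⟨x,y⟩| / (‖x‖ ‖y‖))`. -/
def dProj {E : Type} [NormedAddCommGroup E] [InnerProductSpace ℂ E] (x y : E) : ℝ :=
  Real.arccos (‖(inner ℂ x y : ℂ)‖ / (‖x‖ * ‖y‖))

/-- Spherical distance `d_S(x,y) = arccos(Re⟨x,y⟩ / (‖x‖ ‖y‖))` for complex vectors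
viewed as real vectors. -/
def dSph {E : Type} [NormedAddCommGroup E] [InnerProductSpace ℂ E] (x y : E) : ℝ :=
  Real.arccos ((inner ℂ x y : ℂ).re / (‖x‖ * ‖y‖))

/-- Spherical distance in a real inner product space. -/
def dSphR {E : Type} [NormedAddCommGroup E] [InnerProductSpace ℝ E] (x y : E) : ℝ :=
  Real.arccos ((inner ℝ x y : ℝ) / (‖x‖ * ‖y‖))

end

open MvPolynomial Finset

lemma MvPolynomial.IsHomogeneous.degree_eq_of_mem_support {σ R : Type*} [CommSemiring R]
    {p : MvPolynomial σ R} {d : ℕ} (hp : p.IsHomogeneous d) {α : σ →₀ ℕ} (hα : α ∈ p.support) :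
    α.degree = d := by
  by_contra h
  exact mem_support_iff.mp hα (hp.coeff_eq_zero h)

lemma bwNormSq_nonneg (n d : ℕ) (p : MvPolynomial (Fin n) ℂ) : 0 ≤ bwNormSq n d p :=
  sum_nonneg fun _ _ => by positivity

lemma bwNorm_nonneg (n d : ℕ) (f : Fin n → MvPolynomial (Fin n) ℂ) : 0 ≤ bwNorm n d f :=
  Real.sqrt_nonneg _

lemma sum_multinomial_mul_prod_pow_le {ι : Type*} [Fintype ι] [DecidableEq ι] {m : ℕ}
    (S : Finset (ι →₀ ℕ)) (hS : ∀ β ∈ S, β.degree = m) {x : ι → ℝ} (hx : ∀ j, 0 ≤ x j) :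
    ∑ β ∈ S, (Nat.multinomial univ β : ℝ) * ∏ j, x j ^ β j ≤ (∑ j, x j) ^ m := by
  rw [sum_pow_eq_sum_piAntidiag]
  calc _ = ∑ γ ∈ S.image (⇑), (Nat.multinomial univ γ : ℝ) * ∏ j, x j ^ γ j :=
        (sum_image fun _ _ _ _ h => DFunLike.coe_injective h).symm
    _ ≤ _ := sum_le_sum_of_subset_of_nonneg ?_ fun _ _ _ =>
        mul_nonneg (Nat.cast_nonneg _) (prod_nonneg fun j _ => pow_nonneg (hx j) _)
  intro γ hγ
  obtain ⟨β, hβ, rfl⟩ := mem_image.mp hγ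
  simpa [mem_piAntidiag, ← Finsupp.degree_eq_sum] using hS β hβ

lemma norm_eval_sq_le_bwNormSq {n m : ℕ} {p : MvPolynomial (Fin n) ℂ} (hp : p.IsHomogeneous m)
    {ζ : Cn n} (hζ : ‖ζ‖ = 1) : ‖eval (fun j => ζ j) p‖ ^ 2 ≤ bwNormSq n m p := by
  have hmultinomial : ∀ β ∈ p.support,
      (∏ j, ((β j).factorial : ℝ)) / m.factorial * Nat.multinomial univ β = 1 := fun β hβ => by
    have h := Nat.multinomial_spec univ β
    rw [← Finsupp.degree_eq_sum, hp.degree_eq_of_mem_support hβ] at h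
    rw [div_mul_eq_mul_div, div_eq_one_iff_eq (by positivity)]
    exact_mod_cast h
  have hζsq : ∑ j, ‖ζ j‖ ^ 2 = 1 := by rw [← EuclideanSpace.norm_sq_eq, hζ, one_pow]
  calc ‖eval (fun j => ζ j) p‖ ^ 2 ≤ (∑ β ∈ p.support, ‖coeff β p‖ * ∏ j, ‖ζ j‖ ^ β j) ^ 2 := by
        gcongr
        rw [eval_eq']
        refine (norm_sum_le _ _).trans_eq (sum_congr rfl fun β _ => ?_)
        simp [norm_prod]
    _ ≤ bwNormSq n m p *
          ∑ β ∈ p.support, (Nat.multinomial univ β : ℝ) * ∏ j, (‖ζ j‖ ^ 2) ^ β j := by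
        refine sum_sq_le_sum_mul_sum_of_sq_le_mul _ (fun _ _ => by positivity)
          (fun _ _ => by positivity) fun β hβ => le_of_eq ?_
        rw [mul_div_assoc, mul_assoc, ← mul_assoc _ (Nat.multinomial _ _ : ℝ),
          hmultinomial β hβ, one_mul, mul_pow, ← prod_pow]
        simp_rw [← pow_mul, mul_comm 2]
    _ ≤ bwNormSq n m p * 1 := by
        gcongr
        · exact bwNormSq_nonneg n m p
        · simpa [hζsq] using sum_multinomial_mul_prod_pow_le p.support
            (fun β hβ => hp.degree_eq_of_mem_support hβ) (fun j => sq_nonneg ‖ζ j‖)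
    _ = bwNormSq n m p := mul_one _

lemma prod_factorial_add_single {ι : Type*} [Fintype ι] [DecidableEq ι] (β : ι →₀ ℕ) (j : ι) :
    ∏ i, (((β + Finsupp.single j 1 : ι →₀ ℕ) i).factorial : ℝ)
      = (β j + 1) * ∏ i, ((β i).factorial : ℝ) := by
  have h : ∀ i, (((β + Finsupp.single j 1 : ι →₀ ℕ) i).factorial : ℝ)
      = (if j = i then (β j + 1 : ℝ) else 1) * (β i).factorial := fun i => by
    rcases eq_or_ne j i with rfl | h
    · simp only [Finsupp.add_apply, Finsupp.single_eq_same, Nat.factorial_succ]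
      push_cast
      ring
    · simp [h]
  simp only [h, prod_mul_distrib, prod_ite_eq, mem_univ, if_true]

lemma bwNormSq_pderiv_le {n d : ℕ} (p : MvPolynomial (Fin n) ℂ) (j : Fin n) :
    bwNormSq n (d - 1) (pderiv j p) ≤ ∑ α ∈ p.support,
      α j * ‖coeff α p‖ ^ 2 * (∏ i, ((α i).factorial : ℝ)) / (d - 1).factorial := by
  have hmem : ∀ β ∈ (pderiv j p).support, β + Finsupp.single j 1 ∈ p.support := fun β hβ => by
    rw [mem_support_iff, coeff_pderiv] at hβ
    exact mem_support_iff.mpr (left_ne_zero_of_mul hβ)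
  calc bwNormSq n (d - 1) (pderiv j p)
      = ∑ α ∈ (pderiv j p).support.image (· + Finsupp.single j 1),
          α j * ‖coeff α p‖ ^ 2 * (∏ i, ((α i).factorial : ℝ)) / (d - 1).factorial := by
        rw [sum_image fun _ _ _ _ h => add_right_cancel h]
        refine sum_congr rfl fun β _ => ?_
        have hnorm : ‖(β j : ℂ) + 1‖ = β j + 1 := by
          exact_mod_cast Complex.norm_natCast (β j + 1)
        rw [coeff_pderiv, prod_factorial_add_single, norm_mul, hnorm]
        simp only [Finsupp.coe_add, Pi.add_apply, Finsupp.single_eq_same, Nat.cast_add, Nat.cast_one]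
        ring
    _ ≤ _ := sum_le_sum_of_subset_of_nonneg (image_subset_iff.mpr hmem)
        fun _ _ _ => by positivity

lemma sum_bwNormSq_pderiv_le {n d : ℕ} {p : MvPolynomial (Fin n) ℂ} (hp : p.IsHomogeneous d) :
    ∑ j, bwNormSq n (d - 1) (pderiv j p) ≤ d ^ 2 * bwNormSq n d p := by
  have hfactorial : (d : ℝ) / (d - 1).factorial = d ^ 2 / d.factorial := by
    rcases d with _ | d
    · simp
    · rw [Nat.factorial_succ]
      push_cast
      field_simp
  calc ∑ j, bwNormSq n (d - 1) (pderiv j p)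
      ≤ ∑ j, ∑ α ∈ p.support,
          α j * ‖coeff α p‖ ^ 2 * (∏ i, ((α i).factorial : ℝ)) / (d - 1).factorial :=
        sum_le_sum fun j _ => bwNormSq_pderiv_le p j
    _ = d ^ 2 * bwNormSq n d p := by
        rw [sum_comm, bwNormSq, mul_sum]
        refine sum_congr rfl fun α hα => ?_
        have hsum : ∑ j, (α j : ℝ) = d := by
          exact_mod_cast (Finsupp.degree_eq_sum α).symm.trans (hp.degree_eq_of_mem_support hα)
        rw [← sum_div, ← sum_mul, ← sum_mul, hsum]
        linear_combination (‖coeff α p‖ ^ 2 * ∏ i, ((α i).factorial : ℝ)) * hfactorial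

lemma hasFDerivAt_eval {σ 𝕜 : Type*} [Fintype σ] [NontriviallyNormedField 𝕜]
    (p : MvPolynomial σ 𝕜) (x : σ → 𝕜) :
    HasFDerivAt (fun y => eval y p)
      (∑ j, eval x (pderiv j p) • ContinuousLinearMap.proj (R := 𝕜) (φ := fun _ : σ => 𝕜) j) x := by
  classical
  induction p using MvPolynomial.induction_on with
  | C a =>
    simp only [eval_C]
    refine (hasFDerivAt_const (𝕜 := 𝕜) a x).congr_fderiv ?_
    ext y
    simp
  | add p q hp hq =>
    simp only [map_add]
    refine (hp.add hq).congr_fderiv ?_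
    ext y
    simp [add_mul, sum_add_distrib]
  | mul_X p i hp =>
    simp only [map_mul, eval_X]
    refine (hp.mul (hasFDerivAt_apply i x)).congr_fderiv ?_
    ext y
    simp [pderiv_X, Pi.single_apply, apply_ite (eval x), ite_mul, add_mul, sum_add_distrib,
      mul_sum, mul_assoc]

lemma fderiv_FF_apply {n d : ℕ} (f : Fin n → MvPolynomial (Fin n) ℂ) (w z : CnC n) :
    fderiv ℂ (FF n d f) w z = WithLp.toLp 2 (fun i =>
        ∑ j, eval (fun k => w.fst k) (pderiv j (f i)) * z.fst j)
      - (w.snd ^ (d - 1) • z.fst + ((d - 1 : ℕ) * w.snd ^ (d - 2) * z.snd : ℂ) • w.fst) := by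
  have hfst := (PiLp.hasFDerivAt_ofLp (𝕜 := ℂ) 2 w.fst).comp w
    (WithLp.fstL 2 ℂ (Cn n) ℂ).hasFDerivAt
  have hsnd := (WithLp.sndL 2 ℂ (Cn n) ℂ).hasFDerivAt (x := w)
  have hcomp := fun i => ((hasFDerivAt_eval (f i) _).comp w hfst).sub
    (((hasDerivAt_pow (d - 1) w.snd).comp_hasFDerivAt w hsnd).mul
      ((hasFDerivAt_apply i _).comp w hfst))
  have hFF : HasFDerivAt (FF n d f) _ w :=
    (PiLp.hasFDerivAt_toLp 2 _).comp w (hasFDerivAt_pi.mpr hcomp)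
  -- `HasFDerivAt.fderiv` needs this instance, which it does not find unaided here
  have : ContinuousSMul ℂ (CnC n) := inferInstance
  rw [hFF.fderiv]
  ext i
  simp [Nat.sub_sub, mul_comm]

lemma norm_sum_eval_pderiv_mul_le {n d : ℕ} {f : Fin n → MvPolynomial (Fin n) ℂ}
    (hf : ∀ i, (f i).IsHomogeneous d) {ζ : Cn n} (hζ : ‖ζ‖ = 1) (u : Cn n) :
    ‖(WithLp.toLp 2 fun i => ∑ j, eval (fun k => ζ k) (pderiv j (f i)) * u j : Cn n)‖
      ≤ d * bwNorm n d f * ‖u‖ := by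
  have hrow : ∀ i, ‖∑ j, eval (fun k => ζ k) (pderiv j (f i)) * u j‖ ^ 2
      ≤ d ^ 2 * bwNormSq n d (f i) * ‖u‖ ^ 2 := fun i =>
    calc ‖∑ j, eval (fun k => ζ k) (pderiv j (f i)) * u j‖ ^ 2
        ≤ (∑ j, ‖eval (fun k => ζ k) (pderiv j (f i))‖ * ‖u j‖) ^ 2 := by
          gcongr
          exact (norm_sum_le _ _).trans_eq (by simp only [norm_mul])
      _ ≤ (∑ j, ‖eval (fun k => ζ k) (pderiv j (f i))‖ ^ 2) * ∑ j, ‖u j‖ ^ 2 :=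
          sum_mul_sq_le_sq_mul_sq _ _ _
      _ ≤ d ^ 2 * bwNormSq n d (f i) * ‖u‖ ^ 2 := by
          rw [EuclideanSpace.norm_sq_eq]
          gcongr
          exact (sum_le_sum fun j _ => norm_eval_sq_le_bwNormSq ((hf i).pderiv) hζ).trans
            (sum_bwNormSq_pderiv_le (hf i))
  have hrhs : 0 ≤ d * bwNorm n d f * ‖u‖ :=
    mul_nonneg (mul_nonneg d.cast_nonneg (bwNorm_nonneg n d f)) (norm_nonneg u)
  rw [← sq_le_sq₀ (norm_nonneg _) hrhs, EuclideanSpace.norm_sq_eq]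
  calc ∑ i, ‖(WithLp.toLp 2 fun i => ∑ j, eval (fun k => ζ k) (pderiv j (f i)) * u j : Cn n) i‖ ^ 2
      ≤ ∑ i, d ^ 2 * bwNormSq n d (f i) * ‖u‖ ^ 2 := sum_le_sum fun i _ => hrow i
    _ = (d * bwNorm n d f * ‖u‖) ^ 2 := by
        rw [← sum_mul, ← mul_sum, bwNorm, mul_pow, mul_pow,
          Real.sq_sqrt (sum_nonneg fun i _ => bwNormSq_nonneg n d (f i))]

lemma norm_fderiv_FF_le {n d : ℕ} (hd : 1 ≤ d) {f : Fin n → MvPolynomial (Fin n) ℂ}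
    (hf : ∀ i, (f i).IsHomogeneous d) {ζ : Cn n} (hζ : ‖ζ‖ = 1) (η : ℂ) :
    ‖fderiv ℂ (FF n d f) (mkPair ζ η)‖
      ≤ d * (bwNorm n d f + max (‖η‖ ^ (d - 1)) (‖η‖ ^ (d - 2))) := by
  set M := max (‖η‖ ^ (d - 1)) (‖η‖ ^ (d - 2))
  have hM : 0 ≤ M := (pow_nonneg (norm_nonneg η) _).trans (le_max_left _ _)
  have hd' : ((d - 1 : ℕ) : ℝ) = d - 1 := by push_cast [hd]; ring
  refine ContinuousLinearMap.opNorm_le_bound _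
    (mul_nonneg d.cast_nonneg (add_nonneg (bwNorm_nonneg n d f) hM)) fun z => ?_
  rw [fderiv_FF_apply]
  have hfst := WithLp.norm_fst_le (x := z)
  have hsnd := WithLp.norm_snd_le (x := z)
  calc _ ≤ d * bwNorm n d f * ‖z.fst‖ + (‖η‖ ^ (d - 1) * ‖z.fst‖
          + (d - 1 : ℕ) * ‖η‖ ^ (d - 2) * ‖z.snd‖ * ‖ζ‖) := by
        refine (norm_sub_le _ _).trans (add_le_add (norm_sum_eval_pderiv_mul_le hf hζ z.fst)
          ((norm_add_le _ _).trans_eq ?_))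
        simp [norm_smul, mkPair]
    _ ≤ d * bwNorm n d f * ‖z‖ + (M * ‖z‖ + (d - 1 : ℕ) * M * ‖z‖) := by
        rw [hζ, mul_one]
        gcongr
        · exact mul_nonneg d.cast_nonneg (bwNorm_nonneg n d f)
        · exact le_max_left _ _
        · exact le_max_right _ _
    _ = d * (bwNorm n d f + M) * ‖z‖ := by rw [hd']; ring

theorem one_le_d_norm_inverse_general (n d : ℕ) (hd : 2 ≤ d)
    (f : Fin n → MvPolynomial (Fin n) ℂ) (hhom : ∀ i, (f i).IsHomogeneous d)
    (ζ : Cn n) (hζ : ‖ζ‖ = 1) (η : ℂ)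
    (hinv : RestrInvertible n d f (mkPair ζ η) (mkPair ζ η)) :
    1 ≤ (d : ℝ) * (bwNorm n d f
        + max (‖η‖ ^ (d - 1)) (‖η‖ ^ (d - 2)))
      * ‖(DFr n d f (mkPair ζ η) (mkPair ζ η)).inverse‖ := by
  obtain ⟨e, he⟩ := hinv
  have : Nontrivial (Cn n) := nontrivial_of_ne ζ 0 (by rintro rfl; simp at hζ)
  have : Nontrivial (perp (mkPair ζ η)) := e.toEquiv.nontrivial
  have hDFr : ‖DFr n d f (mkPair ζ η) (mkPair ζ η)‖
      ≤ d * (bwNorm n d f + max (‖η‖ ^ (d - 1)) (‖η‖ ^ (d - 2))) :=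
    calc _ ≤ ‖fderiv ℂ (FF n d f) (mkPair ζ η)‖ * ‖(perp (mkPair ζ η)).subtypeL‖ :=
          ContinuousLinearMap.opNorm_comp_le _ _
      _ ≤ ‖fderiv ℂ (FF n d f) (mkPair ζ η)‖ := by
          grw [Submodule.norm_subtypeL_le, mul_one]
      _ ≤ _ := norm_fderiv_FF_le (by omega) hhom hζ η
  rw [← he] at hDFr
  rw [← he, ContinuousLinearMap.inverse_equiv]
  calc (1 : ℝ)
      ≤ ‖(e : perp (mkPair ζ η) →L[ℂ] Cn n)‖ * ‖(e.symm : Cn n →L[ℂ] perp (mkPair ζ η))‖ :=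
        e.one_le_norm_mul_norm_symm
    _ ≤ _ := by gcongr

theorem one_le_d_norm_inverse (n d : ℕ) (hn : 2 ≤ n) (hd : 2 ≤ d)
    (f : Fin n → MvPolynomial (Fin n) ℂ) (hhom : ∀ i, (f i).IsHomogeneous d)
    (ζ : Cn n) (hζ : ‖ζ‖ = 1) (η : ℂ)
    (heig : ∀ i, MvPolynomial.eval (fun j => ζ j) (f i) = η ^ (d - 1) * ζ i)
    (hinv : RestrInvertible n d f (mkPair ζ η) (mkPair ζ η)) :
    1 ≤ (d : ℝ) * (bwNorm n d f
        + max (‖η‖ ^ (d - 1)) (‖η‖ ^ (d - 2)))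
      * ‖(DFr n d f (mkPair ζ η) (mkPair ζ η)).inverse‖ :=
  one_le_d_norm_inverse_general n d hd f hhom ζ hζ η hinv
end

section
/- Let n ≥ 2, let ζ, v ∈ ℂⁿ with ‖ζ‖ = ‖v‖ = 1, and let η, λ ∈ ℂ with |η| ≤ 1. If d_S((ζ,η),(v,λ)) < π/16, then d_S((ζ,η),(v,λ)) ≥ (2/(π·√8))·d_P(ζ,v). -/
/-! Write `a = |⟨ζ, v⟩|`, `N = ‖(ζ, η)‖ ‖(v, λ)‖` and `t = cos d_S`. The real part of the inner
product of the pairs is at most `a + |η| |λ|`, while Cauchy–Schwarz on the two components gives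
`N ≥ 1 + |η| |λ|`; hence `1 - a ≤ N (1 - t)`. As `|η| ≤ ‖ζ‖`, the product `|η| |λ|` is at most
`N / √2`, so `t > cos (π / 16) > 1 / 8 + 1 / √2` forces `N ≤ 8`. Finally `1 - t ≤ d_S² / 2` and
`1 - a ≥ 2 d_P² / π²` turn `1 - a ≤ 8 (1 - t)` into the claim. -/

namespace Real

lemma sq_arccos_le {a : ℝ} (h₁ : -1 ≤ a) (h₂ : a ≤ 1) : arccos a ^ 2 ≤ π ^ 2 / 2 * (1 - a) := by
  have h := cos_le_one_sub_mul_cos_sq (x := arccos a)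
    (by rw [abs_of_nonneg (arccos_nonneg a)]; exact arccos_le_pi a)
  rw [cos_arccos h₁ h₂] at h
  have hπ : 0 < π ^ 2 := by positivity
  field_simp at h ⊢
  linarith

lemma one_sub_le_sq_arccos_div_two {t : ℝ} (h₁ : -1 ≤ t) (h₂ : t ≤ 1) :
    1 - t ≤ arccos t ^ 2 / 2 := by
  have h := one_sub_sq_div_two_le_cos (x := arccos t)
  rw [cos_arccos h₁ h₂] at h
  linarith

lemma arccos_le_of_one_sub_le_mul {a t k : ℝ} (ha₁ : -1 ≤ a) (ha₂ : a ≤ 1)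
    (ht₁ : -1 ≤ t) (ht₂ : t ≤ 1) (hk : 0 ≤ k) (h : 1 - a ≤ k * (1 - t)) :
    arccos a ≤ π * √k / 2 * arccos t := by
  have hsq : arccos a ^ 2 ≤ (π * √k / 2 * arccos t) ^ 2 :=
    calc arccos a ^ 2 ≤ π ^ 2 / 2 * (1 - a) := sq_arccos_le ha₁ ha₂
      _ ≤ π ^ 2 / 2 * (k * (arccos t ^ 2 / 2)) := by
        gcongr
        exact h.trans (mul_le_mul_of_nonneg_left (one_sub_le_sq_arccos_div_two ht₁ ht₂) hk)
      _ = (π * √k / 2 * arccos t) ^ 2 := by rw [mul_pow, div_pow, mul_pow, Real.sq_sqrt hk]; ring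
  exact pow_le_pow_iff_left₀ (arccos_nonneg a) (by have := arccos_nonneg t; positivity)
    two_ne_zero |>.mp hsq

lemma one_div_eight_add_inv_sqrt_two_lt_cos_pi_div_sixteen : 1 / 8 + (√2)⁻¹ < cos (π / 16) := by
  have hcos := one_sub_sq_div_two_le_cos (x := π / 16)
  have hsqrt : (√2)⁻¹ < 5 / 7 := by
    rw [inv_lt_comm₀ (by positivity) (by norm_num), lt_sqrt (by norm_num)]
    norm_num
  nlinarith [pi_lt_four, pi_pos]

end Real

lemma norm_mkPair_sq {n : ℕ} (v : Cn n) (η : ℂ) : ‖mkPair v η‖ ^ 2 = ‖v‖ ^ 2 + ‖η‖ ^ 2 :=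
  WithLp.prod_norm_sq_eq_of_L2 _

lemma inner_mkPair {n : ℕ} (ζ v : Cn n) (η lam : ℂ) :
    inner ℂ (mkPair ζ η) (mkPair v lam) = inner ℂ ζ v + (starRingEnd ℂ) η * lam := by
  simp [mkPair, mul_comm]

lemma re_inner_mkPair_le {n : ℕ} (ζ v : Cn n) (η lam : ℂ) :
    (inner ℂ (mkPair ζ η) (mkPair v lam)).re ≤ ‖(inner ℂ ζ v : ℂ)‖ + ‖η‖ * ‖lam‖ := by
  rw [inner_mkPair, Complex.add_re]
  gcongr
  · exact Complex.re_le_norm _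
  · simpa using Complex.re_le_norm ((starRingEnd ℂ) η * lam)

lemma norm_mul_norm_add_norm_mul_norm_le {n : ℕ} (ζ v : Cn n) (η lam : ℂ) :
    ‖ζ‖ * ‖v‖ + ‖η‖ * ‖lam‖ ≤ ‖mkPair ζ η‖ * ‖mkPair v lam‖ := by
  have hsq : (‖ζ‖ * ‖v‖ + ‖η‖ * ‖lam‖) ^ 2 ≤ (‖mkPair ζ η‖ * ‖mkPair v lam‖) ^ 2 := by
    rw [mul_pow, norm_mkPair_sq, norm_mkPair_sq]
    nlinarith [sq_nonneg (‖ζ‖ * ‖lam‖ - ‖η‖ * ‖v‖)]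
  exact pow_le_pow_iff_left₀ (by positivity) (by positivity) two_ne_zero |>.mp hsq

lemma abs_re_inner_div_norm_mul_norm_le_one {E : Type*} [NormedAddCommGroup E]
    [InnerProductSpace ℂ E] (x y : E) : |(inner ℂ x y).re / (‖x‖ * ‖y‖)| ≤ 1 := by
  rw [abs_div, abs_of_nonneg (by positivity : 0 ≤ ‖x‖ * ‖y‖)]
  exact div_le_one_of_le₀ ((Complex.abs_re_le_norm _).trans (norm_inner_le_norm x y))
    (by positivity)

lemma norm_inner_le_one {E : Type*} [NormedAddCommGroup E] [InnerProductSpace ℂ E] {x y : E}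
    (hx : ‖x‖ = 1) (hy : ‖y‖ = 1) : ‖(inner ℂ x y : ℂ)‖ ≤ 1 := by
  simpa [hx, hy] using norm_inner_le_norm (𝕜 := ℂ) x y

lemma sub_norm_inner_le_sub_re_inner_mkPair {n : ℕ} (ζ v : Cn n) (η lam : ℂ) :
    ‖ζ‖ * ‖v‖ - ‖(inner ℂ ζ v : ℂ)‖ ≤
      ‖mkPair ζ η‖ * ‖mkPair v lam‖ - (inner ℂ (mkPair ζ η) (mkPair v lam)).re := by
  linarith [re_inner_mkPair_le ζ v η lam, norm_mul_norm_add_norm_mul_norm_le ζ v η lam]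

lemma sqrt_two_mul_norm_le_norm_mkPair {n : ℕ} {v : Cn n} {η : ℂ} (h : ‖η‖ ≤ ‖v‖) :
    √2 * ‖η‖ ≤ ‖mkPair v η‖ := by
  have hsq : (√2 * ‖η‖) ^ 2 ≤ ‖mkPair v η‖ ^ 2 := by
    rw [mul_pow, Real.sq_sqrt zero_le_two, norm_mkPair_sq]
    nlinarith [norm_nonneg η]
  exact pow_le_pow_iff_left₀ (by positivity) (norm_nonneg _) two_ne_zero |>.mp hsq

lemma one_le_norm_mkPair_mul_norm_mkPair {n : ℕ} {ζ v : Cn n} (hζ : ‖ζ‖ = 1) (hv : ‖v‖ = 1)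
    (η lam : ℂ) : 1 ≤ ‖mkPair ζ η‖ * ‖mkPair v lam‖ := by
  have hCS := norm_mul_norm_add_norm_mul_norm_le ζ v η lam
  rw [hζ, hv, one_mul] at hCS
  linarith [mul_nonneg (norm_nonneg η) (norm_nonneg lam)]

lemma norm_mkPair_mul_norm_mkPair_le_eight {n : ℕ} {ζ v : Cn n} {η lam : ℂ}
    (hζ : ‖ζ‖ = 1) (hv : ‖v‖ = 1) (hη : ‖η‖ ≤ 1)
    (hcos : Real.cos (Real.pi / 16) <
      (inner ℂ (mkPair ζ η) (mkPair v lam)).re / (‖mkPair ζ η‖ * ‖mkPair v lam‖)) :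
    ‖mkPair ζ η‖ * ‖mkPair v lam‖ ≤ 8 := by
  set N := ‖mkPair ζ η‖ * ‖mkPair v lam‖
  have hN : 0 < N := one_pos.trans_le (one_le_norm_mkPair_mul_norm_mkPair hζ hv η lam)
  have hsecond : ‖η‖ * ‖lam‖ ≤ (√2)⁻¹ * N := by
    rw [le_inv_mul_iff₀ (by positivity), ← mul_assoc]
    exact mul_le_mul (sqrt_two_mul_norm_le_norm_mkPair (hζ ▸ hη))
      (WithLp.norm_snd_le (x := mkPair v lam)) (norm_nonneg _) (norm_nonneg _)
  rw [lt_div_iff₀ hN] at hcos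
  nlinarith [Real.one_div_eight_add_inv_sqrt_two_lt_cos_pi_div_sixteen, norm_inner_le_one hζ hv,
    re_inner_mkPair_le ζ v η lam]

theorem dS_pair_ge_dP_first_general (n : ℕ)
    (ζ v : Cn n) (hζ : ‖ζ‖ = 1) (hv : ‖v‖ = 1)
    (η lam : ℂ) (hη : ‖η‖ ≤ 1)
    (hδ : dSph (mkPair ζ η) (mkPair v lam) < Real.pi / 16) :
    dSph (mkPair ζ η) (mkPair v lam) ≥ (2 / (Real.pi * Real.sqrt 8)) * dProj ζ v := by
  open Real in
  set N := ‖mkPair ζ η‖ * ‖mkPair v lam‖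
  set t := (inner ℂ (mkPair ζ η) (mkPair v lam)).re / N
  obtain ⟨ht₁, ht₂⟩ :=
    abs_le.mp (abs_re_inner_div_norm_mul_norm_le_one (mkPair ζ η) (mkPair v lam))
  have hcos : cos (π / 16) < t := by
    by_contra! h
    have := antitone_arccos h
    rw [arccos_cos (by positivity) (by linarith [pi_pos])] at this
    exact (hδ.trans_le this).false
  have hN := norm_mkPair_mul_norm_mkPair_le_eight hζ hv hη hcos
  have hone_sub_le : 1 - ‖(inner ℂ ζ v : ℂ)‖ ≤ 8 * (1 - t) := by
    have hgap := sub_norm_inner_le_sub_re_inner_mkPair ζ v η lam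
    have hN₀ : N ≠ 0 := (one_pos.trans_le (one_le_norm_mkPair_mul_norm_mkPair hζ hv η lam)).ne'
    rw [hζ, hv, one_mul, ← div_mul_cancel₀ (inner ℂ (mkPair ζ η) (mkPair v lam)).re hN₀] at hgap
    nlinarith
  have hangle := arccos_le_of_one_sub_le_mul (by linarith [norm_nonneg (inner ℂ ζ v)])
    (norm_inner_le_one hζ hv) ht₁ ht₂ (by norm_num) hone_sub_le
  have hdP : dProj ζ v = arccos ‖(inner ℂ ζ v : ℂ)‖ := by simp [dProj, hζ, hv]
  rw [hdP, ge_iff_le, div_mul_eq_mul_div, div_le_iff₀ (by positivity)]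
  change _ ≤ arccos t * _
  linarith

theorem dS_pair_ge_dP_first (n : ℕ) (hn : 2 ≤ n)
    (ζ v : Cn n) (hζ : ‖ζ‖ = 1) (hv : ‖v‖ = 1)
    (η lam : ℂ) (hη : ‖η‖ ≤ 1)
    (hδ : dSph (mkPair ζ η) (mkPair v lam) < Real.pi / 16) :
    dSph (mkPair ζ η) (mkPair v lam) ≥ (2 / (Real.pi * Real.sqrt 8)) * dProj ζ v :=
  dS_pair_ge_dP_first_general n ζ v hζ hv η lam hη hδ
end
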